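/- Let G be the star K_{1,3} on 4 vertices and let A be a 4×4 nonnegative symmetric matrix with at most one zero off-diagonal entry per row. Then there exists a path P on the 4 vertices such that F_A(G) < F_A(P). -/

import Mathlib

open SimpleGraph Finset

/-- `F_A(G) = ∑_{i<j} d_G(i,j) · a_{i,j}`. -/
noncomputable def FA {n : ℕ} (A : Matrix (Fin n) (Fin n) ℝ) (G : SimpleGraph (Fin n)) : ℝ :=
  ∑ i : Fin n, ∑ j : Fin n, if i < j then (G.dist i j : ℝ) * A i j else 0

/-- `G` is a path on its vertex set (isomorphic to the path graph). -/
def IsPathGraph {n : ℕ} (G : SimpleGraph (Fin n)) : Prop :=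
  Nonempty (G ≃g SimpleGraph.pathGraph n)

/-- The distance matrix of `G`. -/
noncomputable def distMat {n : ℕ} (G : SimpleGraph (Fin n)) : Matrix (Fin n) (Fin n) ℝ :=
  fun i j => (G.dist i j : ℝ)

/-- The diagonal matrix of row sums of the distance matrix. -/
noncomputable def transMat {n : ℕ} (G : SimpleGraph (Fin n)) : Matrix (Fin n) (Fin n) ℝ :=
  Matrix.diagonal fun i => ∑ j : Fin n, (G.dist i j : ℝ)

/-- Distance signless Laplacian `D^Q(G) = T(G) + D(G)`. -/
noncomputable def DQmat {n : ℕ} (G : SimpleGraph (Fin n)) : Matrix (Fin n) (Fin n) ℝ :=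
  transMat G + distMat G

/-- Distance Laplacian `D^L(G) = T(G) - D(G)`. -/
noncomputable def DLmat {n : ℕ} (G : SimpleGraph (Fin n)) : Matrix (Fin n) (Fin n) ℝ :=
  transMat G - distMat G

/-- Largest eigenvalue of a matrix, as the supremum of its spectrum. -/
noncomputable def maxEig {n : ℕ} (M : Matrix (Fin n) (Fin n) ℝ) : ℝ :=
  sSup (spectrum ℝ M)

/-!
Choose a leaf `w` with `a_{cw} > 0`; it exists because at most one of the three entries
`a_{cx}`, `x ≠ c`, vanishes. Call the other two leaves `u`, `v`, ordered so that `a_{uw} ≥ a_{vw}`.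
Passing from the star to the path `u – c – v – w` only changes the distances of the pairs
`{c, w}` (1 to 2), `{u, w}` (2 to 3) and `{v, w}` (2 to 1), so `F_A` grows by
`a_{cw} + a_{uw} - a_{vw} > 0`.
-/

namespace SimpleGraph

variable {V W : Type*} {G : SimpleGraph V} {G' : SimpleGraph W}

theorem Hom.edist_le (f : G →g G') (u v : V) : G'.edist (f u) (f v) ≤ G.edist u v :=
  le_iInf fun p => Walk.length_map f p ▸ (p.map f).edist_le

theorem Iso.dist_eq (f : G ≃g G') (u v : V) : G'.dist (f u) (f v) = G.dist u v := by
  have h := f.symm.toEmbedding.toHom.edist_le (f u) (f v)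
  simp only [Embedding.coe_toHom, RelIso.coe_toRelEmbedding, RelIso.symm_apply_apply] at h
  exact congrArg ENat.toNat (le_antisymm (f.toEmbedding.toHom.edist_le u v) h)

theorem dist_eq_two_of_adj_of_adj {u v m : V} (hne : u ≠ v) (hna : ¬G.Adj u v)
    (hum : G.Adj u m) (hmv : G.Adj m v) : G.dist u v = 2 := by
  have h : G.edist u v = 2 := edist_eq_two_iff.mpr ⟨hne, hna, m, hum, hmv.symm⟩
  simp [dist, h]

theorem dist_of_adj_iff_star [DecidableEq V] {c : V}
    (hstar : ∀ u v, G.Adj u v ↔ (u = c ∧ v ≠ c) ∨ (v = c ∧ u ≠ c)) (x y : V) :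
    G.dist x y = if x = y then 0 else if x = c ∨ y = c then 1 else 2 := by
  by_cases hxy : x = y
  · simp [hxy]
  by_cases hc : x = c ∨ y = c
  · rw [if_neg hxy, if_pos hc, dist_eq_one_iff_adj, hstar]
    grind
  · simp only [not_or] at hc
    rw [if_neg hxy, if_neg (by tauto)]
    exact dist_eq_two_of_adj_of_adj hxy (by simp [hstar, hc]) ((hstar x c).mpr (by simp [hc]))
      ((hstar c y).mpr (by simp [hc]))

theorem Walk.abs_sub_le_length (f : V → ℤ) (hf : ∀ x y, G.Adj x y → |f x - f y| ≤ 1)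
    {u v : V} (p : G.Walk u v) : |f u - f v| ≤ p.length := by
  induction p with
  | nil => simp
  | @cons x y z h q ih =>
    rw [Walk.length_cons]
    push_cast
    linarith [abs_sub_le (f x) (f y) (f z), hf x y h]

theorem pathGraph_dist_le_of_add_eq {n d : ℕ} {i j : Fin n} (h : (i : ℕ) + d = j) :
    (pathGraph n).dist i j ≤ d := by
  induction d generalizing j with
  | zero => simp [Fin.ext (by simpa using h)]
  | succ d ih =>
    let k : Fin n := ⟨i + d, by omega⟩
    have hkj : (pathGraph n).Adj k j := pathGraph_adj.mpr (Or.inl (by change (i : ℕ) + d + 1 = j; omega))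
    calc (pathGraph n).dist i j ≤ (pathGraph n).dist i k + (pathGraph n).dist k j :=
          (pathGraph_preconnected n i k).dist_triangle_left j
      _ ≤ d + 1 := by rw [dist_eq_one_iff_adj.mpr hkj]; grind

theorem pathGraph_dist {n : ℕ} (i j : Fin n) : (pathGraph n).dist i j = Nat.dist i j := by
  apply le_antisymm
  · rcases le_total i j with hij | hij
    · exact pathGraph_dist_le_of_add_eq (by rw [Nat.dist_eq_sub_of_le hij]; omega)
    · rw [dist_comm, Nat.dist_comm]
      exact pathGraph_dist_le_of_add_eq (by rw [Nat.dist_eq_sub_of_le hij]; omega)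
  · obtain ⟨p, hp⟩ := (pathGraph_preconnected n i j).exists_walk_length_eq_dist
    have h := p.abs_sub_le_length (fun k : Fin n => ((k : ℕ) : ℤ)) fun x y hxy => by
      rw [pathGraph_adj] at hxy
      rw [abs_le]; omega
    rw [← hp]
    unfold Nat.dist
    rw [abs_le] at h
    omega

end SimpleGraph

theorem Equiv.Perm.exists_apply_eq_and_apply_eq {α : Type*} [DecidableEq α] {a b x y : α}
    (hab : a ≠ b) (hxy : x ≠ y) : ∃ e : Equiv.Perm α, e a = x ∧ e b = y := by
  refine ⟨Equiv.swap a x * Equiv.swap b (Equiv.swap a x y), ?_, by simp⟩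
  rw [Equiv.Perm.mul_apply, Equiv.swap_apply_of_ne_of_ne hab, Equiv.swap_apply_left]
  rw [Ne, eq_comm, Equiv.swap_apply_eq_iff, Equiv.swap_apply_left]
  exact hxy.symm

theorem sum_sum_ite_lt_eq_half {ι : Type*} [Fintype ι] [LinearOrder ι] (f : ι → ι → ℝ)
    (hf : ∀ i j, f i j = f j i) (hdiag : ∀ i, f i i = 0) :
    ∑ i, ∑ j, (if i < j then f i j else 0) = 1 / 2 * ∑ i, ∑ j, f i j := by
  have hswap : ∑ i, ∑ j, (if j < i then f i j else 0) = ∑ i, ∑ j, (if i < j then f i j else 0) := by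
    rw [Finset.sum_comm]
    simp_rw [hf]
  have hsplit : ∑ i, ∑ j, f i j =
      ∑ i, ∑ j, (if i < j then f i j else 0) + ∑ i, ∑ j, (if j < i then f i j else 0) := by
    simp_rw [← Finset.sum_add_distrib]
    refine Finset.sum_congr rfl fun i _ => Finset.sum_congr rfl fun j _ => ?_
    rcases lt_trichotomy i j with h | rfl | h
    · simp [h, h.not_gt]
    · simp [hdiag]
    · simp [h, h.not_gt]
  linarith

theorem FA_eq_half_sum_comp {n : ℕ} {A : Matrix (Fin n) (Fin n) ℝ} (hA : A.IsSymm)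
    (H : SimpleGraph (Fin n)) (e : Equiv.Perm (Fin n)) :
    FA A H = 1 / 2 * ∑ i, ∑ j, (H.dist (e i) (e j) : ℝ) * A (e i) (e j) := by
  rw [FA, sum_sum_ite_lt_eq_half _ (fun i j => by rw [dist_comm, hA.apply]) (by simp)]
  congr 1
  exact (Equiv.sum_comp e _).symm.trans (Finset.sum_congr rfl fun i _ => (Equiv.sum_comp e _).symm)

theorem FA_map_pathGraph_eq {G : SimpleGraph (Fin 4)} {A : Matrix (Fin 4) (Fin 4) ℝ}
    (hA : A.IsSymm) (e : Equiv.Perm (Fin 4))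
    (hstar : ∀ u v, G.Adj u v ↔ (u = e 1 ∧ v ≠ e 1) ∨ (v = e 1 ∧ u ≠ e 1)) :
    FA A ((pathGraph 4).map e.toEmbedding) =
      FA A G + A (e 1) (e 3) + A (e 0) (e 3) - A (e 2) (e 3) := by
  rw [FA_eq_half_sum_comp hA _ e, FA_eq_half_sum_comp hA _ e]
  have hP (i j : Fin 4) : ((pathGraph 4).map e.toEmbedding).dist (e i) (e j) = Nat.dist i j :=
    pathGraph_dist i j ▸ (Iso.map e _).dist_eq i j
  simp only [hP, dist_of_adj_iff_star hstar, e.injective.eq_iff, Fin.sum_univ_four, Nat.dist,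
    Fin.coe_ofNat_eq_mod, Nat.reduceMod, Nat.cast_ofNat, ↓reduceIte, Fin.reduceEq, or_false, or_true]
  linarith [hA.apply (e 0) (e 3), hA.apply (e 1) (e 3), hA.apply (e 2) (e 3)]

theorem stmt_15 (G : SimpleGraph (Fin 4)) (c : Fin 4)
    (hstar : ∀ u v : Fin 4, G.Adj u v ↔ (u = c ∧ v ≠ c) ∨ (v = c ∧ u ≠ c))
    (A : Matrix (Fin 4) (Fin 4) ℝ) (hsymm : A.IsSymm) (hnn : ∀ i j, 0 ≤ A i j)
    (hrow : ∀ i j₁ j₂ : Fin 4, j₁ ≠ i → j₂ ≠ i → A i j₁ = 0 → A i j₂ = 0 → j₁ = j₂) :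
    ∃ P : SimpleGraph (Fin 4), IsPathGraph P ∧ FA A G < FA A P := by
  obtain ⟨w, hwc, hw⟩ : ∃ w, w ≠ c ∧ 0 < A c w := by
    have two_others : ∀ c : Fin 4, ∃ j₁ j₂ : Fin 4, j₁ ≠ c ∧ j₂ ≠ c ∧ j₁ ≠ j₂ := by decide
    obtain ⟨j₁, j₂, h₁, h₂, h₁₂⟩ := two_others c
    by_contra! h
    exact h₁₂ (hrow c j₁ j₂ h₁ h₂ ((h j₁ h₁).antisymm (hnn c j₁)) ((h j₂ h₂).antisymm (hnn c j₂)))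
  have path_of_perm (e : Equiv.Perm (Fin 4)) (he₁ : e 1 = c) (he₃ : e 3 = w)
      (hle : A (e 2) w ≤ A (e 0) w) : ∃ P, IsPathGraph P ∧ FA A G < FA A P := by
    subst he₁ he₃
    refine ⟨(pathGraph 4).map e.toEmbedding, ⟨(Iso.map e _).symm⟩, ?_⟩
    rw [FA_map_pathGraph_eq hsymm e hstar]
    linarith
  obtain ⟨e, he₁, he₃⟩ := Equiv.Perm.exists_apply_eq_and_apply_eq (by decide : (1 : Fin 4) ≠ 3)
    hwc.symm
  rcases le_total (A (e 2) w) (A (e 0) w) with hle | hle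
  · exact path_of_perm e he₁ he₃ hle
  · exact path_of_perm (e * Equiv.swap 0 2) (by simp [Equiv.swap_apply_of_ne_of_ne, he₁])
      (by simp [Equiv.swap_apply_of_ne_of_ne, he₃]) (by simpa using hle)
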